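/- Let M be a model category which is right proper (weak equivalences are closed under pullbacks along fibrations) and in which, for every weak equivalence w : X → X', the product morphism w × w : X × X → X' × X' is again a weak equivalence. Then the path-homotopy relation ≈ is a congruence on the full subcategory Cof(M) of cofibrant objects, and the canonical functor Cof(M)/≈ → Ho Cof(M) from the quotient category to the homotopy category (the localization of Cof(M) at its weak equivalences) is faithful. -/

import Mathlib

open CategoryTheory CategoryTheory.Limits

universe v u

/-- A (closed) model structure on a category `C` with finite limits and colimits,
in the sense of Quillen: classes of cofibrations, fibrations and weak equivalences,
containing all isomorphisms, satisfying two-out-of-three for weak equivalences,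
closure under retracts, the lifting axioms and the factorization axioms. -/
structure ModelStructure (C : Type u) [Category.{v} C]
    [HasFiniteLimits C] [HasFiniteColimits C] where
  cof : MorphismProperty C
  fib : MorphismProperty C
  weq : MorphismProperty C
  cof_of_isIso : ∀ {X Y : C} (f : X ⟶ Y), IsIso f → cof f
  fib_of_isIso : ∀ {X Y : C} (f : X ⟶ Y), IsIso f → fib f
  weq_of_isIso : ∀ {X Y : C} (f : X ⟶ Y), IsIso f → weq f
  weq_comp : ∀ {X Y Z : C} (f : X ⟶ Y) (g : Y ⟶ Z), weq f → weq g → weq (f ≫ g)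
  weq_of_comp_left : ∀ {X Y Z : C} (f : X ⟶ Y) (g : Y ⟶ Z), weq f → weq (f ≫ g) → weq g
  weq_of_comp_right : ∀ {X Y Z : C} (f : X ⟶ Y) (g : Y ⟶ Z), weq g → weq (f ≫ g) → weq f
  cof_retract : ∀ {A B A' B' : C} (f : A ⟶ B) (g : A' ⟶ B')
    (iA : A ⟶ A') (rA : A' ⟶ A) (iB : B ⟶ B') (rB : B' ⟶ B),
    iA ≫ rA = 𝟙 A → iB ≫ rB = 𝟙 B → iA ≫ g = f ≫ iB → g ≫ rB = rA ≫ f → cof g → cof f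
  fib_retract : ∀ {A B A' B' : C} (f : A ⟶ B) (g : A' ⟶ B')
    (iA : A ⟶ A') (rA : A' ⟶ A) (iB : B ⟶ B') (rB : B' ⟶ B),
    iA ≫ rA = 𝟙 A → iB ≫ rB = 𝟙 B → iA ≫ g = f ≫ iB → g ≫ rB = rA ≫ f → fib g → fib f
  weq_retract : ∀ {A B A' B' : C} (f : A ⟶ B) (g : A' ⟶ B')
    (iA : A ⟶ A') (rA : A' ⟶ A) (iB : B ⟶ B') (rB : B' ⟶ B),
    iA ≫ rA = 𝟙 A → iB ≫ rB = 𝟙 B → iA ≫ g = f ≫ iB → g ≫ rB = rA ≫ f → weq g → weq f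
  lift_of_weq_cof : ∀ {A B X Y : C} (i : A ⟶ B) (p : X ⟶ Y),
    cof i → weq i → fib p → HasLiftingProperty i p
  lift_of_weq_fib : ∀ {A B X Y : C} (i : A ⟶ B) (p : X ⟶ Y),
    cof i → fib p → weq p → HasLiftingProperty i p
  factor_cof_triv_fib : ∀ {X Y : C} (f : X ⟶ Y),
    ∃ (Z : C) (i : X ⟶ Z) (p : Z ⟶ Y), cof i ∧ fib p ∧ weq p ∧ i ≫ p = f
  factor_triv_cof_fib : ∀ {X Y : C} (f : X ⟶ Y),
    ∃ (Z : C) (i : X ⟶ Z) (p : Z ⟶ Y), cof i ∧ weq i ∧ fib p ∧ i ≫ p = f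

namespace ModelStructure

variable {C : Type u} [Category.{v} C] [HasFiniteLimits C] [HasFiniteColimits C]
  (M : ModelStructure C)

/-- An object is fibrant if the unique morphism to the terminal object is a fibration. -/
def Fibrant (X : C) : Prop := M.fib (terminal.from X)

/-- An object is cofibrant if the unique morphism from the initial object is a cofibration. -/
def Cofibrant (X : C) : Prop := M.cof (initial.to X)

/-- A cylinder for `X`: a cofibration `ins : X ⊔ X ⟶ Z` and a weak equivalence `p : Z ⟶ X`
whose composite is the fold map. -/
structure Cylinder (X : C) where
  Z : C
  ins : (X ⨿ X) ⟶ Z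
  p : Z ⟶ X
  cof_ins : M.cof ins
  weq_p : M.weq p
  ins_p : ins ≫ p = coprod.desc (𝟙 X) (𝟙 X)

/-- `f` and `g` are cylinder homotopic if there is a cylinder homotopy from `f` to `g`. -/
def CylinderHomotopic {X Y : C} (f g : X ⟶ Y) : Prop :=
  ∃ (cyl : M.Cylinder X) (H : cyl.Z ⟶ Y),
    coprod.inl ≫ cyl.ins ≫ H = f ∧ coprod.inr ≫ cyl.ins ≫ H = g

/-- A path object for `Y`: a weak equivalence `s : Y ⟶ P` and a fibration `pr : P ⟶ Y ⨯ Y`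
whose composite is the diagonal. -/
structure PathObject (Y : C) where
  P : C
  pr : P ⟶ (Y ⨯ Y)
  s : Y ⟶ P
  fib_pr : M.fib pr
  weq_s : M.weq s
  s_pr : s ≫ pr = prod.lift (𝟙 Y) (𝟙 Y)

/-- `f` and `g` are path homotopic if there is a path homotopy from `f` to `g`. -/
def PathHomotopic {X Y : C} (f g : X ⟶ Y) : Prop :=
  ∃ (po : M.PathObject Y) (K : X ⟶ po.P),
    K ≫ po.pr ≫ prod.fst = f ∧ K ≫ po.pr ≫ prod.snd = g

/-- Left properness: weak equivalences are closed under pushouts along cofibrations. -/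
def LeftProper : Prop :=
  ∀ ⦃A B X P : C⦄ (f : A ⟶ X) (g : A ⟶ B) (h : X ⟶ P) (k : B ⟶ P),
    IsPushout f g h k → M.cof g → M.weq f → M.weq k

/-- Right properness: weak equivalences are closed under pullbacks along fibrations. -/
def RightProper : Prop :=
  ∀ ⦃P X Y B : C⦄ (fst : P ⟶ X) (snd : P ⟶ Y) (f : X ⟶ B) (g : Y ⟶ B),
    IsPullback fst snd f g → M.fib g → M.weq f → M.weq snd

/-- The weak equivalences of the full subcategory of fibrant objects. -/
def weqFib : MorphismProperty (ObjectProperty.FullSubcategory M.Fibrant) := fun _ _ f => M.weq f.hom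

/-- The cylinder homotopy relation on the full subcategory of fibrant objects. -/
def cylRel : HomRel (ObjectProperty.FullSubcategory M.Fibrant) :=
  fun {X Y} f g => M.CylinderHomotopic (X := X.obj) (Y := Y.obj) f.hom g.hom

/-- The weak equivalences of the full subcategory of cofibrant objects. -/
def weqCof : MorphismProperty (ObjectProperty.FullSubcategory M.Cofibrant) := fun _ _ f => M.weq f.hom

/-- The path homotopy relation on the full subcategory of cofibrant objects. -/
def pathRel : HomRel (ObjectProperty.FullSubcategory M.Cofibrant) :=
  fun {X Y} f g => M.PathHomotopic (X := X.obj) (Y := Y.obj) f.hom g.hom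

end ModelStructure

/-!
Path homotopy from a cofibrant source is reflexive, symmetric, and compatible with composition
on both sides (on the right via very good path objects, whose section is a cofibration).
Right properness and the hypothesis on `w × w` let a path object on `Y'` be pulled back along a
weak equivalence `w : Y ⟶ Y'`, so `f ≈ g` can be checked after composing with `w`. With `w` a
fibrant replacement this reduces transitivity to fibrant targets, where two path objects are
glued along a pullback.

For faithfulness, `X ↦ RX` (a fibrant replacement, still cofibrant) is a functor
`Cof(M) ⥤ Cof(M)/≈`. It inverts weak equivalences by a Whitehead argument (factor the map as a
trivial cofibration followed by a trivial fibration; both have homotopy inverses), so it factors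
through `Ho Cof(M)`, and `f ≈ g` can be read off from the equality of its values on `f` and `g`.
-/

namespace CategoryTheory.Quotient

variable {C : Type*} [Category C] (r : HomRel C)

lemma isIso_functor_map_of_rel {X Y : C} (f : X ⟶ Y) (g : Y ⟶ X)
    (hfg : r (f ≫ g) (𝟙 X)) (hgf : r (g ≫ f) (𝟙 Y)) : IsIso ((functor r).map f) :=
  ⟨(functor r).map g,
    by rw [← Functor.map_comp, Quotient.sound r hfg, Functor.map_id],
    by rw [← Functor.map_comp, Quotient.sound r hgf, Functor.map_id]⟩

lemma faithful_lift_of_reflects {D E : Type*} [Category D] [Category E] (F : C ⥤ D)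
    (hF : ∀ (X Y : C) (f g : X ⟶ Y), r f g → F.map f = F.map g) (G : D ⥤ E)
    (hG : ∀ ⦃X Y : C⦄ (f g : X ⟶ Y), G.map (F.map f) = G.map (F.map g) → r f g) :
    (lift r F hF).Faithful where
  map_injective {x y} φ ψ h := by
    obtain ⟨f, rfl⟩ := (functor r).map_surjective φ
    obtain ⟨g, rfl⟩ := (functor r).map_surjective ψ
    rw [lift_map_functor_map, lift_map_functor_map] at h
    exact Quotient.sound r (hG f g (congrArg G.map h))

end CategoryTheory.Quotient

namespace ModelStructure

variable {C : Type u} [Category.{v} C] [HasFiniteLimits C] [HasFiniteColimits C]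
  (M : ModelStructure C)

-- `simp` does not apply these to the limits provided by `HasFiniteLimits` unless told to.
attribute [local simp] prod.lift_fst prod.lift_snd prod.lift_fst_assoc prod.lift_snd_assoc
  pullback.lift_fst pullback.lift_snd pullback.lift_fst_assoc pullback.lift_snd_assoc

lemma cof_of_llp {A B : C} (i : A ⟶ B)
    (h : ∀ ⦃X Y : C⦄ (p : X ⟶ Y), M.fib p → M.weq p → HasLiftingProperty i p) : M.cof i := by
  obtain ⟨Z, j, p, hj, hp, hpw, hfac⟩ := M.factor_cof_triv_fib i
  have := h p hp hpw
  have sq : CommSq j i p (𝟙 B) := ⟨by simp [hfac]⟩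
  exact M.cof_retract i j (𝟙 A) (𝟙 A) sq.lift p (by simp) sq.fac_right
    (by simp [sq.fac_left]) (by simp [hfac]) hj

lemma fib_of_rlp {X Y : C} (p : X ⟶ Y)
    (h : ∀ ⦃A B : C⦄ (i : A ⟶ B), M.cof i → M.weq i → HasLiftingProperty i p) : M.fib p := by
  obtain ⟨Z, i, q, hi, hiw, hq, hfac⟩ := M.factor_triv_cof_fib p
  have := h i hi hiw
  have sq : CommSq (𝟙 X) i p q := ⟨by simp [hfac]⟩
  exact M.fib_retract p q i sq.lift (𝟙 Y) (𝟙 Y) sq.fac_left (by simp)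
    (by simp [hfac]) (by simp [sq.fac_right]) hq

lemma cof_comp {A B D : C} {f : A ⟶ B} {g : B ⟶ D} (hf : M.cof f) (hg : M.cof g) :
    M.cof (f ≫ g) :=
  M.cof_of_llp _ fun _ _ p hp hpw =>
    have := M.lift_of_weq_fib f p hf hp hpw
    have := M.lift_of_weq_fib g p hg hp hpw
    inferInstance

lemma fib_comp {X Y Z : C} {p : X ⟶ Y} {q : Y ⟶ Z} (hp : M.fib p) (hq : M.fib q) :
    M.fib (p ≫ q) :=
  M.fib_of_rlp _ fun _ _ i hi hiw =>
    have := M.lift_of_weq_cof i p hi hiw hp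
    have := M.lift_of_weq_cof i q hi hiw hq
    inferInstance

lemma fib_of_isPullback {P X Y B : C} {fst : P ⟶ X} {snd : P ⟶ Y} {f : X ⟶ B} {g : Y ⟶ B}
    (h : IsPullback fst snd f g) (hg : M.fib g) : M.fib fst :=
  M.fib_of_rlp _ fun _ _ i hi hiw =>
    have := M.lift_of_weq_cof i g hi hiw hg
    h.flip.hasLiftingProperty i

lemma cofibrant_of_cof {X Y : C} (hX : M.Cofibrant X) {i : X ⟶ Y} (hi : M.cof i) :
    M.Cofibrant Y := by
  rw [Cofibrant, Subsingleton.elim (initial.to Y) (initial.to X ≫ i)]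
  exact M.cof_comp hX hi

lemma fib_prod_fst {A B : C} (hB : M.Fibrant B) : M.fib (prod.fst : A ⨯ B ⟶ A) :=
  M.fib_of_isPullback
    (IsPullback.of_isLimit_binaryFan_of_isTerminal (prodIsProd A B) terminalIsTerminal) hB

lemma fib_prod_map_id {A B : C} {f : A ⟶ B} (hf : M.fib f) (X : C) :
    M.fib (prod.map f (𝟙 X)) :=
  M.fib_of_isPullback (IsPullback.of_prod_fst_with_id f X).flip hf

lemma weq_prod_map_id (hproper : M.RightProper) {A B : C} {f : A ⟶ B} (hf : M.weq f) {X : C}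
    (hX : M.Fibrant X) : M.weq (prod.map f (𝟙 X)) :=
  hproper _ _ _ _ (IsPullback.of_prod_fst_with_id f X) (M.fib_prod_fst hX) hf

lemma exists_extension {A B T : C} {i : A ⟶ B} (hi : M.cof i) (hiw : M.weq i)
    (hT : M.Fibrant T) (f : A ⟶ T) : ∃ g : B ⟶ T, i ≫ g = f :=
  have := M.lift_of_weq_cof i _ hi hiw hT
  ⟨_, (CommSq.mk (terminal.hom_ext (f ≫ terminal.from T) (i ≫ terminal.from B))).fac_left⟩

lemma exists_lift {E B A : C} {q : E ⟶ B} (hq : M.fib q) (hqw : M.weq q)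
    (hA : M.Cofibrant A) (f : A ⟶ B) : ∃ g : A ⟶ E, g ≫ q = f :=
  have := M.lift_of_weq_fib _ q hA hq hqw
  ⟨_, (CommSq.mk (initial.hom_ext (initial.to E ≫ q) (initial.to A ≫ f))).fac_right⟩

structure FibrantReplacement (X : C) where
  obj : C
  ι : X ⟶ obj
  cof_ι : M.cof ι
  weq_ι : M.weq ι
  fibrant : M.Fibrant obj

lemma nonempty_fibrantReplacement (X : C) : Nonempty (M.FibrantReplacement X) :=
  let ⟨Z, i, p, hi, hiw, hp, _⟩ := M.factor_triv_cof_fib (terminal.from X)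
  ⟨⟨Z, i, hi, hiw, by rwa [Fibrant, Subsingleton.elim (terminal.from Z) p]⟩⟩

noncomputable def fibrantReplacement (X : C) : M.FibrantReplacement X :=
  Classical.choice (M.nonempty_fibrantReplacement X)

namespace FibrantReplacement

variable {M} {X Y : C} (RX : M.FibrantReplacement X) (RY : M.FibrantReplacement Y)

noncomputable def map (f : X ⟶ Y) : RX.obj ⟶ RY.obj :=
  (M.exists_extension RX.cof_ι RX.weq_ι RY.fibrant (f ≫ RY.ι)).choose

lemma ι_map (f : X ⟶ Y) : RX.ι ≫ RX.map RY f = f ≫ RY.ι :=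
  (M.exists_extension RX.cof_ι RX.weq_ι RY.fibrant (f ≫ RY.ι)).choose_spec

lemma weq_map {f : X ⟶ Y} (hf : M.weq f) : M.weq (RX.map RY f) :=
  M.weq_of_comp_left _ _ RX.weq_ι (by rw [ι_map]; exact M.weq_comp _ _ hf RY.weq_ι)

end FibrantReplacement

namespace PathObject

variable {M} {Y : C} (P : M.PathObject Y)

lemma s_pr_fst : P.s ≫ P.pr ≫ prod.fst = 𝟙 Y := by rw [reassoc_of% P.s_pr, prod.lift_fst]

lemma s_pr_snd : P.s ≫ P.pr ≫ prod.snd = 𝟙 Y := by rw [reassoc_of% P.s_pr, prod.lift_snd]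

lemma weq_pr_snd : M.weq (P.pr ≫ prod.snd) :=
  M.weq_of_comp_left _ _ P.weq_s (by rw [s_pr_snd]; exact M.weq_of_isIso _ inferInstance)

lemma fib_pr_fst (hY : M.Fibrant Y) : M.fib (P.pr ≫ prod.fst) :=
  M.fib_comp P.fib_pr (M.fib_prod_fst hY)

noncomputable def swap : M.PathObject Y where
  P := P.P
  pr := P.pr ≫ (prod.braiding Y Y).hom
  s := P.s
  fib_pr := M.fib_comp P.fib_pr (M.fib_of_isIso _ inferInstance)
  weq_s := P.weq_s
  s_pr := by rw [reassoc_of% P.s_pr]; ext <;> simp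

lemma exists_very_good {X : C} (hX : M.Cofibrant X) (K : X ⟶ P.P) :
    ∃ (P' : M.PathObject Y) (K' : X ⟶ P'.P), M.cof P'.s ∧ K' ≫ P'.pr = K ≫ P.pr := by
  obtain ⟨Z, j, ρ, hj, hjw, hρ, hfac⟩ := M.factor_triv_cof_fib P.s
  have hρw : M.weq ρ := M.weq_of_comp_left j ρ hjw (hfac ▸ P.weq_s)
  obtain ⟨K', hK'⟩ := M.exists_lift hρ hρw hX K
  exact ⟨⟨Z, ρ ≫ P.pr, j, M.fib_comp hρ P.fib_pr, hjw, by rw [reassoc_of% hfac, P.s_pr]⟩,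
    K', hj, by rw [← hK', Category.assoc]⟩

end PathObject

lemma nonempty_pathObject (Y : C) : Nonempty (M.PathObject Y) :=
  let ⟨Z, i, p, _, hi, hp, hfac⟩ := M.factor_triv_cof_fib (prod.lift (𝟙 Y) (𝟙 Y))
  ⟨⟨Z, p, i, hp, hi, hfac⟩⟩

lemma pathHomotopic_refl {X Y : C} (f : X ⟶ Y) : M.PathHomotopic f f :=
  let P := Classical.choice (M.nonempty_pathObject Y)
  ⟨P, f ≫ P.s, by simp [P.s_pr_fst], by simp [P.s_pr_snd]⟩

lemma pathHomotopic_symm {X Y : C} {f g : X ⟶ Y} (h : M.PathHomotopic f g) :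
    M.PathHomotopic g f := by
  obtain ⟨P, K, hf, hg⟩ := h
  exact ⟨P.swap, K, by simpa [PathObject.swap] using hg, by simpa [PathObject.swap] using hf⟩

lemma pathHomotopic_precomp {X' X Y : C} (e : X' ⟶ X) {f g : X ⟶ Y}
    (h : M.PathHomotopic f g) : M.PathHomotopic (e ≫ f) (e ≫ g) :=
  let ⟨P, K, hf, hg⟩ := h
  ⟨P, e ≫ K, by rw [Category.assoc, hf], by rw [Category.assoc, hg]⟩

lemma pathHomotopic_postcomp {X Y T : C} (hX : M.Cofibrant X) {f g : X ⟶ Y}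
    (h : M.PathHomotopic f g) (e : Y ⟶ T) : M.PathHomotopic (f ≫ e) (g ≫ e) := by
  obtain ⟨P₀, K₀, hf, hg⟩ := h
  obtain ⟨P, K, hs, hK⟩ := P₀.exists_very_good hX K₀
  let PT := Classical.choice (M.nonempty_pathObject T)
  have := M.lift_of_weq_cof P.s PT.pr hs P.weq_s PT.fib_pr
  have sq : CommSq (e ≫ PT.s) P.s PT.pr (P.pr ≫ prod.map e e) :=
    ⟨by rw [Category.assoc, PT.s_pr, reassoc_of% P.s_pr]; ext <;> simp⟩
  refine ⟨PT, K ≫ sq.lift, ?_, ?_⟩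
  · simp [sq.fac_right_assoc, reassoc_of% hK, ← hf]
  · simp [sq.fac_right_assoc, reassoc_of% hK, ← hg]

lemma pathHomotopic_of_precomp_trivCof {X X' T : C} {w : X ⟶ X'} (hw : M.cof w)
    (hww : M.weq w) {u u' : X' ⟶ T} (h : w ≫ u = w ≫ u') : M.PathHomotopic u u' := by
  let P := Classical.choice (M.nonempty_pathObject T)
  have := M.lift_of_weq_cof w P.pr hw hww P.fib_pr
  have sq : CommSq (w ≫ u ≫ P.s) w P.pr (prod.lift u u') :=
    ⟨by simp only [Category.assoc, P.s_pr]; ext <;> simp [h]⟩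
  exact ⟨P, sq.lift, by simp [reassoc_of% sq.fac_right], by simp [reassoc_of% sq.fac_right]⟩

namespace PathObject

variable {M}

noncomputable def comap (hproper : M.RightProper)
    (hprod : ∀ ⦃X X' : C⦄ (w : X ⟶ X'), M.weq w → M.weq (prod.map w w))
    {Y Y' : C} {w : Y ⟶ Y'} (hw : M.weq w) (P : M.PathObject Y') : M.PathObject Y where
  P := pullback (prod.map w w) P.pr
  pr := pullback.fst _ _
  s := pullback.lift (prod.lift (𝟙 Y) (𝟙 Y)) (w ≫ P.s)
    (by rw [Category.assoc, P.s_pr]; ext <;> simp)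
  fib_pr := M.fib_of_isPullback (IsPullback.of_hasPullback _ _) P.fib_pr
  weq_s := M.weq_of_comp_right _ (pullback.snd _ _)
    (hproper _ _ _ _ (IsPullback.of_hasPullback _ _) P.fib_pr (hprod w hw))
    (by rw [pullback.lift_snd]; exact M.weq_comp _ _ hw P.weq_s)
  s_pr := pullback.lift_fst _ _ _

/-- Points are pairs of a path of `P₁` and a path of `P₂` starting where the first one ends;
right properness is used twice, for `prod.map _ (𝟙 Y)` and then for `pullback.snd`. -/
noncomputable def trans (hproper : M.RightProper) {Y : C} (hY : M.Fibrant Y)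
    (P₁ P₂ : M.PathObject Y) : M.PathObject Y where
  P := pullback (prod.map (P₁.pr ≫ prod.snd) (𝟙 Y)) P₂.pr
  pr := pullback.fst _ _ ≫ prod.map (P₁.pr ≫ prod.fst) (𝟙 Y)
  s := pullback.lift (prod.lift P₁.s (𝟙 Y)) P₂.s (by rw [P₂.s_pr]; ext <;> simp [P₁.s_pr_snd])
  fib_pr := M.fib_comp (M.fib_of_isPullback (IsPullback.of_hasPullback _ _) P₂.fib_pr)
    (M.fib_prod_map_id (P₁.fib_pr_fst hY) Y)
  weq_s := M.weq_of_comp_right _ (pullback.snd _ _)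
    (hproper _ _ _ _ (IsPullback.of_hasPullback _ _) P₂.fib_pr
      (M.weq_prod_map_id hproper P₁.weq_pr_snd hY))
    (by rw [pullback.lift_snd]; exact P₂.weq_s)
  s_pr := by ext <;> simp [P₁.s_pr_fst]

end PathObject

lemma pathHomotopic_of_postcomp_weq (hproper : M.RightProper)
    (hprod : ∀ ⦃X X' : C⦄ (w : X ⟶ X'), M.weq w → M.weq (prod.map w w))
    {X Y Y' : C} {w : Y ⟶ Y'} (hw : M.weq w) {f g : X ⟶ Y}
    (h : M.PathHomotopic (f ≫ w) (g ≫ w)) : M.PathHomotopic f g := by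
  obtain ⟨P, K, hf, hg⟩ := h
  refine ⟨P.comap hproper hprod hw,
    pullback.lift (prod.lift f g) K (by ext <;> simp [hf, hg]), ?_, ?_⟩ <;>
  simp [PathObject.comap]

lemma pathHomotopic_trans_of_fibrant (hproper : M.RightProper) {X Y : C} (hY : M.Fibrant Y)
    {f g h : X ⟶ Y} (hfg : M.PathHomotopic f g) (hgh : M.PathHomotopic g h) :
    M.PathHomotopic f h := by
  obtain ⟨P₁, K₁, hf, hg⟩ := hfg
  obtain ⟨P₂, K₂, hg', hh⟩ := hgh
  refine ⟨P₁.trans hproper hY P₂,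
    pullback.lift (prod.lift K₁ h) K₂ (by ext <;> simp [hg, hg', hh]), ?_, ?_⟩
  · simp [PathObject.trans, hf]
  · simp [PathObject.trans]

lemma pathHomotopic_trans (hproper : M.RightProper)
    (hprod : ∀ ⦃X X' : C⦄ (w : X ⟶ X'), M.weq w → M.weq (prod.map w w))
    {X Y : C} (hX : M.Cofibrant X) {f g h : X ⟶ Y}
    (hfg : M.PathHomotopic f g) (hgh : M.PathHomotopic g h) : M.PathHomotopic f h :=
  let R := M.fibrantReplacement Y
  M.pathHomotopic_of_postcomp_weq hproper hprod R.weq_ι <|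
    M.pathHomotopic_trans_of_fibrant hproper R.fibrant
      (M.pathHomotopic_postcomp hX hfg R.ι) (M.pathHomotopic_postcomp hX hgh R.ι)

lemma congruence_pathRel (hproper : M.RightProper)
    (hprod : ∀ ⦃X X' : C⦄ (w : X ⟶ X'), M.weq w → M.weq (prod.map w w)) :
    Congruence M.pathRel where
  equivalence {X _} := ⟨fun f => M.pathHomotopic_refl f.hom, M.pathHomotopic_symm,
    M.pathHomotopic_trans hproper hprod X.property⟩
  comp_left f _ _ h := M.pathHomotopic_precomp f.hom h
  comp_right {X _ _ _ _} g h := M.pathHomotopic_postcomp X.property h g.hom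

lemma isIso_map_of_weq_of_fibrant (hproper : M.RightProper)
    (hprod : ∀ ⦃X X' : C⦄ (w : X ⟶ X'), M.weq w → M.weq (prod.map w w))
    {X Y : ObjectProperty.FullSubcategory M.Cofibrant} (hX : M.Fibrant X.obj)
    (f : X ⟶ Y) (hf : M.weq f.hom) : IsIso ((Quotient.functor M.pathRel).map f) := by
  obtain ⟨E, j, q, hj, hq, hqw, hfac⟩ := M.factor_cof_triv_fib f.hom
  have hjw : M.weq j := M.weq_of_comp_right j q hqw (hfac ▸ hf)
  obtain ⟨r, hr⟩ := M.exists_extension hj hjw hX (𝟙 X.obj)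
  obtain ⟨t, ht⟩ := M.exists_lift hq hqw Y.property (𝟙 Y.obj)
  let E' : ObjectProperty.FullSubcategory M.Cofibrant := ⟨E, M.cofibrant_of_cof X.property hj⟩
  have hf' : f = (ObjectProperty.homMk j : X ⟶ E') ≫ ObjectProperty.homMk q :=
    ObjectProperty.hom_ext _ hfac.symm
  have hjr : (ObjectProperty.homMk j : X ⟶ E') ≫ ObjectProperty.homMk r = 𝟙 X :=
    ObjectProperty.hom_ext _ hr
  have htq : (ObjectProperty.homMk t : Y ⟶ E') ≫ ObjectProperty.homMk q = 𝟙 Y :=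
    ObjectProperty.hom_ext _ ht
  have : IsIso ((Quotient.functor M.pathRel).map (ObjectProperty.homMk j : X ⟶ E')) :=
    Quotient.isIso_functor_map_of_rel _ _ (ObjectProperty.homMk r)
      (by rw [hjr]; exact M.pathHomotopic_refl _)
      (M.pathHomotopic_of_precomp_trivCof hj hjw (by simp [E', reassoc_of% hr]))
  have : IsIso ((Quotient.functor M.pathRel).map (ObjectProperty.homMk q : E' ⟶ Y)) :=
    Quotient.isIso_functor_map_of_rel _ _ (ObjectProperty.homMk t)
      (M.pathHomotopic_of_postcomp_weq hproper hprod hqw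
        (by simpa [E', ht] using M.pathHomotopic_refl q))
      (by rw [htq]; exact M.pathHomotopic_refl _)
  rw [hf', Functor.map_comp]
  infer_instance

noncomputable def fibrantReplacementFunctor :
    ObjectProperty.FullSubcategory M.Cofibrant ⥤ Quotient M.pathRel where
  obj X := (Quotient.functor _).obj
    ⟨(M.fibrantReplacement X.obj).obj, M.cofibrant_of_cof X.property (M.fibrantReplacement _).cof_ι⟩
  map {X Y} f := (Quotient.functor _).map <| ObjectProperty.homMk <|
    (M.fibrantReplacement X.obj).map (M.fibrantReplacement Y.obj) f.hom
  map_id X := by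
    rw [← (Quotient.functor _).map_id]
    exact CategoryTheory.Quotient.sound _ <| M.pathHomotopic_of_precomp_trivCof
      (M.fibrantReplacement _).cof_ι (M.fibrantReplacement _).weq_ι
      (by simp [FibrantReplacement.ι_map])
  map_comp f g := by
    rw [← (Quotient.functor _).map_comp]
    exact CategoryTheory.Quotient.sound _ <| M.pathHomotopic_of_precomp_trivCof
      (M.fibrantReplacement _).cof_ι (M.fibrantReplacement _).weq_ι
      (by simp [FibrantReplacement.ι_map, reassoc_of% FibrantReplacement.ι_map])

lemma fibrantReplacementFunctor_inverts (hproper : M.RightProper)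
    (hprod : ∀ ⦃X X' : C⦄ (w : X ⟶ X'), M.weq w → M.weq (prod.map w w)) :
    M.weqCof.IsInvertedBy M.fibrantReplacementFunctor := fun _ _ _ hf =>
  M.isIso_map_of_weq_of_fibrant hproper hprod (M.fibrantReplacement _).fibrant _
    ((M.fibrantReplacement _).weq_map _ hf)

lemma pathRel_of_fibrantReplacementFunctor_map_eq (hproper : M.RightProper)
    (hprod : ∀ ⦃X X' : C⦄ (w : X ⟶ X'), M.weq w → M.weq (prod.map w w))
    {X Y : ObjectProperty.FullSubcategory M.Cofibrant} {f g : X ⟶ Y}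
    (h : M.fibrantReplacementFunctor.map f = M.fibrantReplacementFunctor.map g) :
    M.pathRel f g := by
  have := M.congruence_pathRel hproper hprod
  have h' := (Quotient.functor_map_eq_iff _ _ _).1 h
  apply M.pathHomotopic_of_postcomp_weq hproper hprod (M.fibrantReplacement Y.obj).weq_ι
  rw [← FibrantReplacement.ι_map, ← FibrantReplacement.ι_map]
  exact M.pathHomotopic_precomp _ h'

lemma weqCof_Q_map_eq_of_pathRel {X Y : ObjectProperty.FullSubcategory M.Cofibrant}
    {f g : X ⟶ Y} (h : M.pathRel f g) : M.weqCof.Q.map f = M.weqCof.Q.map g := by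
  obtain ⟨P₀, K₀, hf, hg⟩ := h
  obtain ⟨P, K, hs, hK⟩ := P₀.exists_very_good X.property K₀
  let P' : ObjectProperty.FullSubcategory M.Cofibrant := ⟨P.P, M.cofibrant_of_cof Y.property hs⟩
  let s : Y ⟶ P' := ObjectProperty.homMk P.s
  let p₀ : P' ⟶ Y := ObjectProperty.homMk (P.pr ≫ prod.fst)
  let p₁ : P' ⟶ Y := ObjectProperty.homMk (P.pr ≫ prod.snd)
  have hp : M.weqCof.Q.map p₀ = M.weqCof.Q.map p₁ := by
    have := M.weqCof.Q_inverts s P.weq_s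
    rw [← cancel_epi (M.weqCof.Q.map s), ← Functor.map_comp, ← Functor.map_comp]
    congr 1
    ext
    simp [s, p₀, p₁, P.s_pr_fst, P.s_pr_snd]
  have hf' : f = ObjectProperty.homMk K ≫ p₀ := by ext; simp [p₀, reassoc_of% hK, hf]
  have hg' : g = ObjectProperty.homMk K ≫ p₁ := by ext; simp [p₁, reassoc_of% hK, hg]
  rw [hf', hg', Functor.map_comp, Functor.map_comp, hp]

end ModelStructure

open ModelStructure in
/-- If `M` is right proper and `w × w` is a weak equivalence for every weak equivalence `w`,
then path homotopy is a congruence on the full subcategory of cofibrant objects and the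
canonical functor from the quotient category to the localization at weak equivalences
(the homotopy category of cofibrant objects) is faithful. -/
theorem faithful_quotient_to_homotopyCategory_of_cofibrant
    {C : Type u} [Category.{v} C] [HasFiniteLimits C] [HasFiniteColimits C]
    (M : ModelStructure C) (hproper : M.RightProper)
    (hprod : ∀ ⦃X X' : C⦄ (w : X ⟶ X'), M.weq w → M.weq (prod.map w w)) :
    Congruence M.pathRel ∧
    ∃ (h : ∀ (X Y : ObjectProperty.FullSubcategory M.Cofibrant) (f g : X ⟶ Y),
        M.pathRel f g → M.weqCof.Q.map f = M.weqCof.Q.map g),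
      (CategoryTheory.Quotient.lift M.pathRel M.weqCof.Q h).Faithful := by
  have hQ : ∀ (X Y : ObjectProperty.FullSubcategory M.Cofibrant) (f g : X ⟶ Y),
      M.pathRel f g → M.weqCof.Q.map f = M.weqCof.Q.map g :=
    fun _ _ _ _ => M.weqCof_Q_map_eq_of_pathRel
  have hinv := M.fibrantReplacementFunctor_inverts hproper hprod
  have hfac := Localization.Construction.fac _ hinv
  refine ⟨M.congruence_pathRel hproper hprod, hQ, Quotient.faithful_lift_of_reflects _ _ hQ
    (Localization.Construction.lift _ hinv) fun _ _ f g h => ?_⟩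
  apply M.pathRel_of_fibrantReplacementFunctor_map_eq hproper hprod
  rw [Functor.congr_hom hfac.symm f, Functor.congr_hom hfac.symm g, Functor.comp_map,
    Functor.comp_map, h]
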